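/- Let p and q be distinct primes and let V be a nontrivial simple module over the group algebra 𝔽_p[ℤ/q]. Then exp(V ⋊ ℤ/q) = pq, and the semidirect product V ⋊ ℤ/q contains no element of order pq. -/

import Mathlib

/-- The multiplicative group structure on `AddAut V` (composition), as in the older Mathlib. -/
instance AddAut.groupOfComp (V : Type*) [Add V] : Group (AddAut V) where
  mul g h := AddEquiv.trans h g
  one := AddEquiv.refl _
  inv := AddEquiv.symm
  mul_assoc _ _ _ := rfl
  one_mul _ := rfl
  mul_one _ := rfl
  inv_mul_cancel := AddEquiv.self_trans_symm

/-- Package an action by additive automorphisms as an action by multiplicative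
automorphisms of `Multiplicative V`, as needed to form a semidirect product. -/
def MonoidHom.toMulAutMultiplicative {H : Type*} [Monoid H] {V : Type*} [AddGroup V]
    (ρ : H →* AddAut V) : H →* MulAut (Multiplicative V) where
  toFun g := AddEquiv.toMultiplicative (ρ g)
  map_one' := by ext v; simp [map_one]; rfl
  map_mul' g h := by ext v; simp; rfl


/-! An element `(v, g)` of `V ⋊ ℤ/q` with `g = 1` has order dividing `p`. If `g ≠ 1`, then
`(v, g) ^ q = (N v, 1)` with `N = ∑_{i<q} ρ(g)^i`. The image of `N` consists of `ρ(g)`-fixed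
vectors, and these form a submodule which is invariant (`ℤ/q` is abelian) and proper (`g`
generates `ℤ/q`, which acts nontrivially), hence zero. So every order divides `p` or `q`, while
`V` and `ℤ/q` supply elements of order `p` and of order `q`. -/

namespace SemidirectProduct

variable {N G : Type*} [CommGroup N] [Group G] {φ : G →* MulAut N}

@[simp]
theorem right_pow (x : N ⋊[φ] G) (n : ℕ) : (x ^ n).right = x.right ^ n :=
  map_pow rightHom x n

theorem left_pow (x : N ⋊[φ] G) (n : ℕ) :
    (x ^ n).left = ∏ i ∈ Finset.range n, φ (x.right ^ i) x.left := by
  induction n with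
  | zero => simp
  | succ n ih => rw [pow_succ, mul_left, ih, right_pow, Finset.prod_range_succ]

end SemidirectProduct

theorem ZModModule.exponent_eq_prime {p : ℕ} (hp : p.Prime) {V : Type*} [AddCommGroup V]
    [Module (ZMod p) V] [Nontrivial V] : AddMonoid.exponent V = p :=
  have : Fact p.Prime := ⟨hp⟩
  (AddMonoid.exponent_eq_prime_iff hp).2 fun v hv =>
    addOrderOf_eq_prime (ZModModule.char_nsmul_eq_zero p v) hv

theorem ZModModule.pow_char_eq_one {n : ℕ} {V : Type*} [AddCommGroup V] [Module (ZMod n) V]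
    (x : Multiplicative V) : x ^ n = 1 := by
  rw [← ofAdd_toAdd x, ← ofAdd_nsmul, ZModModule.char_nsmul_eq_zero, ofAdd_zero]

theorem MonoidHom.map_ne_one_of_prime_card {G H : Type*} [Group G] [MulOneClass H] {p : ℕ}
    [Fact p.Prime] (hG : Nat.card G = p) {ρ : G →* H} (hρ : ρ ≠ 1) {g : G} (hg : g ≠ 1) :
    ρ g ≠ 1 := by
  intro hρg
  have hker : Subgroup.zpowers g ≤ ρ.ker := (Subgroup.zpowers_le).2 hρg
  rw [zpowers_eq_top_of_prime_card hG hg, top_le_iff, MonoidHom.ker_eq_top_iff] at hker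
  exact hρ hker

theorem MonoidHom.addAut_map_mul_apply {G V : Type*} [Monoid G] [Add V] (ρ : G →* AddAut V)
    (g h : G) (v : V) : ρ (g * h) v = ρ g (ρ h v) := by
  rw [map_mul]; rfl

theorem sum_range_pow_apply_eq_zero {n : ℕ} {V G : Type*} [AddCommGroup V] [Module (ZMod n) V]
    [CommGroup G] (ρ : G →* AddAut V)
    (hsimple : ∀ W : Submodule (ZMod n) V, (∀ g, ∀ v ∈ W, ρ g v ∈ W) → W = ⊥ ∨ W = ⊤)
    {g : G} (hg : ρ g ≠ 1) {m : ℕ} (hgm : g ^ m = 1) (v : V) :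
    ∑ i ∈ Finset.range m, ρ (g ^ i) v = 0 := by
  set F := LinearMap.eqLocus ((ρ g).toAddMonoidHom.toZModLinearMap n) LinearMap.id
  have hF : ∀ w, w ∈ F ↔ ρ g w = w := fun w => LinearMap.mem_eqLocus
  have hF_invariant : ∀ h, ∀ w ∈ F, ρ h w ∈ F := by
    intro h w hw
    rw [hF] at hw ⊢
    rw [← ρ.addAut_map_mul_apply, mul_comm, ρ.addAut_map_mul_apply, hw]
  have hF_ne_top : F ≠ ⊤ := fun hF_top =>
    hg (AddEquiv.ext fun w => (hF w).1 (hF_top ▸ Submodule.mem_top))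
  have hF_bot : F = ⊥ := (hsimple F hF_invariant).resolve_right hF_ne_top
  -- the norm element is fixed by `ρ g` because `g ^ m = g ^ 0`
  have hfixed : ρ g (∑ i ∈ Finset.range m, ρ (g ^ i) v) = ∑ i ∈ Finset.range m, ρ (g ^ i) v := by
    have h_shift := Finset.sum_range_succ' (fun i => ρ (g ^ i) v) m
    rw [Finset.sum_range_succ, hgm, pow_zero, add_left_inj] at h_shift
    simp only [map_sum, ← ρ.addAut_map_mul_apply, ← pow_succ']
    exact h_shift.symm
  rwa [← Submodule.mem_bot (ZMod n), ← hF_bot, hF]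

section

variable {p : ℕ} {V : Type*} [AddCommGroup V] [Module (ZMod p) V]

theorem orderOf_dvd_char_of_right_eq_one {G : Type*} [Group G] {ρ : G →* AddAut V}
    {x : Multiplicative V ⋊[ρ.toMulAutMultiplicative] G} (hx : x.right = 1) : orderOf x ∣ p := by
  rw [← SemidirectProduct.inl_left_mul_inr_right x, hx, map_one, mul_one,
    orderOf_injective _ SemidirectProduct.inl_injective]
  exact orderOf_dvd_of_pow_eq_one (ZModModule.pow_char_eq_one x.left)

theorem pow_eq_one_of_right_ne_one {q : ℕ} (hq : q.Prime)
    {ρ : Multiplicative (ZMod q) →* AddAut V} (hρ : ρ ≠ 1)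
    (hsimple : ∀ W : Submodule (ZMod p) V, (∀ g, ∀ v ∈ W, ρ g v ∈ W) → W = ⊥ ∨ W = ⊤)
    {x : Multiplicative V ⋊[ρ.toMulAutMultiplicative] Multiplicative (ZMod q)}
    (hx : x.right ≠ 1) : x ^ q = 1 := by
  have : Fact q.Prime := ⟨hq⟩
  have hcard : Nat.card (Multiplicative (ZMod q)) = q := by simp
  have hxq : x.right ^ q = 1 := ZModModule.pow_char_eq_one x.right
  ext
  · rw [SemidirectProduct.left_pow, SemidirectProduct.one_left, toAdd_one, toAdd_prod]
    exact sum_range_pow_apply_eq_zero ρ hsimple (ρ.map_ne_one_of_prime_card hcard hρ hx) hxq _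
  · rw [SemidirectProduct.right_pow, hxq, SemidirectProduct.one_right]

end

theorem exponent_semidirectProduct_eq_and_no_element_of_order_general
    (p q : ℕ) (hp : p.Prime) (hq : q.Prime) (hpq : p ≠ q)
    (V : Type*) [AddCommGroup V] [Module (ZMod p) V] [Nontrivial V]
    (ρ : Multiplicative (ZMod q) →* AddAut V)
    (hnontrivial : ∃ (g : Multiplicative (ZMod q)) (v : V), ρ g v ≠ v)
    (hsimple : ∀ W : Submodule (ZMod p) V,
      (∀ (g : Multiplicative (ZMod q)), ∀ v ∈ W, ρ g v ∈ W) → W = ⊥ ∨ W = ⊤) :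
    Monoid.exponent (Multiplicative V ⋊[ρ.toMulAutMultiplicative] Multiplicative (ZMod q))
        = p * q ∧
      ∀ x : Multiplicative V ⋊[ρ.toMulAutMultiplicative] Multiplicative (ZMod q),
        orderOf x ≠ p * q := by
  have hρ : ρ ≠ 1 := by
    obtain ⟨g, v, hgv⟩ := hnontrivial
    exact fun h => hgv (by rw [h]; rfl)
  have horder (x : Multiplicative V ⋊[ρ.toMulAutMultiplicative] Multiplicative (ZMod q)) :
      orderOf x ∣ p ∨ orderOf x ∣ q := by
    by_cases hx : x.right = 1
    · exact .inl (orderOf_dvd_char_of_right_eq_one hx)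
    · exact .inr (orderOf_dvd_of_pow_eq_one (pow_eq_one_of_right_ne_one hq hρ hsimple hx))
  have hp_dvd := Monoid.exponent_dvd_of_monoidHom _
    (SemidirectProduct.inl_injective (φ := ρ.toMulAutMultiplicative))
  have hq_dvd := Monoid.exponent_dvd_of_monoidHom _
    (SemidirectProduct.inr_injective (φ := ρ.toMulAutMultiplicative))
  rw [Monoid.exponent_multiplicative, ZModModule.exponent_eq_prime hp] at hp_dvd
  rw [Monoid.exponent_multiplicative, ZMod.exponent] at hq_dvd
  have hpq_coprime : p.Coprime q := (Nat.coprime_primes hp hq).2 hpq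
  refine ⟨Nat.dvd_antisymm ?_ (hpq_coprime.mul_dvd_of_dvd_of_dvd hp_dvd hq_dvd), fun x hx => ?_⟩
  · refine Monoid.exponent_dvd_of_forall_pow_eq_one fun x => orderOf_dvd_iff_pow_eq_one.1 ?_
    exact (horder x).elim (·.trans (dvd_mul_right p q)) (·.trans (dvd_mul_left q p))
  · rcases horder x with h | h <;> rw [hx] at h
    · exact (Nat.le_of_dvd hp.pos h).not_gt (lt_mul_of_one_lt_right hp.pos hq.one_lt)
    · exact (Nat.le_of_dvd hq.pos h).not_gt (lt_mul_of_one_lt_left hq.pos hp.one_lt)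

/-- **Lemma.** Let `p ≠ q` be primes and let `V` be a nontrivial simple
`𝔽_p[ℤ/q]`-module. Then `exp(V ⋊ ℤ/q) = p * q`, and `V ⋊ ℤ/q` contains no element
of order `p * q`. -/
theorem exponent_semidirectProduct_eq_and_no_element_of_order
    (p q : ℕ) (hp : p.Prime) (hq : q.Prime) (hpq : p ≠ q)
    (V : Type*) [AddCommGroup V] [Module (ZMod p) V] [Finite V] [Nontrivial V]
    (ρ : Multiplicative (ZMod q) →* AddAut V)
    (hnontrivial : ∃ (g : Multiplicative (ZMod q)) (v : V), ρ g v ≠ v)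
    (hsimple : ∀ W : Submodule (ZMod p) V,
      (∀ (g : Multiplicative (ZMod q)), ∀ v ∈ W, ρ g v ∈ W) → W = ⊥ ∨ W = ⊤) :
    Monoid.exponent (Multiplicative V ⋊[ρ.toMulAutMultiplicative] Multiplicative (ZMod q))
        = p * q ∧
      ∀ x : Multiplicative V ⋊[ρ.toMulAutMultiplicative] Multiplicative (ZMod q),
        orderOf x ≠ p * q :=
  exponent_semidirectProduct_eq_and_no_element_of_order_general p q hp hq hpq V ρ hnontrivial
    hsimple
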